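/- Suppose H ≅ C_p (p an odd prime) acts simplicially on a finite simplicial complex K satisfying complementarity on vertex set V, and suppose every connected component of the fixed point complex K^H is a pseudomanifold (in particular, not a simplex of positive dimension). Then K^H has at most 3 connected components. -/

import Mathlib

/-!
The orbits that are vertices of `K^H` are pairwise disjoint subsets of `V`. For a set `S` of
components of `K^H`, let `σ_S` be the union of the orbits lying in components of `S`. If `σ_S`
is a simplex, so is the union of any two of its orbits, hence `S` has at most one component;
and `σ_{Sᶜ}` lies in the complement of `σ_S`. Complementarity therefore forces `S` or `Sᶜ` to have
at most one component, for every `S`, which fails for two of four components.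
-/

/-- A finite simplicial complex (given as a predicate on vertex sets) is a
`d`-pseudomanifold if every simplex is contained in a `d`-simplex, every
`(d-1)`-simplex lies in exactly two `d`-simplices, and it is strongly connected. -/
def IsPseudomanifold {W : Type*} (L : Set W → Prop) (d : ℕ) : Prop :=
  (∀ σ, L σ → ∃ τ, L τ ∧ σ ⊆ τ ∧ τ.ncard = d + 1) ∧
  (∀ σ, L σ → σ.ncard = d → {τ : Set W | L τ ∧ τ.ncard = d + 1 ∧ σ ⊆ τ}.ncard = 2) ∧
  (∀ σ τ : Set W, L σ → L τ → σ.ncard = d + 1 → τ.ncard = d + 1 →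
    Relation.ReflTransGen
      (fun a b => L a ∧ L b ∧ a.ncard = d + 1 ∧ b.ncard = d + 1 ∧ (a ∩ b).ncard = d) σ τ)

open Set Function

theorem card_le_three_of_forall_subsingleton_or_compl_subsingleton {Q : Type*}
    (h : ∀ S : Set Q, S.Subsingleton ∨ Sᶜ.Subsingleton) : Nat.card Q ≤ 3 := by
  by_contra! hQ
  have : Finite Q := Nat.finite_of_card_ne_zero (by omega)
  obtain ⟨S, -, hS⟩ := exists_subset_card_eq (s := (univ : Set Q)) (n := 2)
    (by rw [ncard_univ]; omega)
  have hSc : Sᶜ.ncard = Nat.card Q - 2 := by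
    rw [← hS, ← ncard_add_ncard_compl S]; omega
  rcases h S with h | h <;> have := ncard_le_one_iff_subsingleton.mpr h <;> omega

section BlockUnion

variable {ι V : Type*} (K : Set V → Prop) (f : ι → Set V)

def classUnion (S : Set (Quot fun i j => K (f i ∪ f j))) : Set V :=
  ⋃ (i) (_ : Quot.mk _ i ∈ S), f i

variable {K f}

theorem subsingleton_of_classUnion (hdown : ∀ σ τ : Set V, τ ⊆ σ → K σ → K τ)
    {S : Set (Quot fun i j => K (f i ∪ f j))} (hS : K (classUnion K f S)) : S.Subsingleton := by
  rintro ⟨i⟩ hi ⟨j⟩ hj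
  refine Quot.sound (hdown _ _ (union_subset ?_ ?_) hS) <;>
    exact subset_biUnion_of_mem (u := f) ‹_›

theorem classUnion_compl_subset (hf : Pairwise (Disjoint on f))
    (S : Set (Quot fun i j => K (f i ∪ f j))) :
    classUnion K f Sᶜ ⊆ (classUnion K f S)ᶜ := by
  simp only [classUnion, subset_compl_iff_disjoint_right, disjoint_iUnion_left,
    disjoint_iUnion_right]
  intro i hi j hj
  exact hf fun hji => hj (hji ▸ hi)

theorem card_quot_union_le_three (hdown : ∀ σ τ : Set V, τ ⊆ σ → K σ → K τ)
    (hK : ∀ σ, K σ ∨ K σᶜ) (hf : Pairwise (Disjoint on f)) :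
    Nat.card (Quot fun i j => K (f i ∪ f j)) ≤ 3 :=
  card_le_three_of_forall_subsingleton_or_compl_subsingleton fun S =>
    (hK (classUnion K f S)).imp (subsingleton_of_classUnion hdown) fun h =>
      subsingleton_of_classUnion hdown (hdown _ _ (classUnion_compl_subset hf S) h)

end BlockUnion

theorem MulAction.pairwise_disjoint_orbit_subtype {G V : Type*} [Group G] [MulAction G V]
    (P : Set V → Prop) :
    Pairwise (Disjoint on fun s : {s : Set V // (∃ v, s = orbit G v) ∧ P s} => (s : Set V)) := by
  rintro ⟨_, ⟨x, rfl⟩, _⟩ ⟨_, ⟨y, rfl⟩, _⟩ hne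
  exact (orbit.eq_or_disjoint x y).resolve_left fun h => hne (Subtype.ext h)

theorem fixedPointComplex_components_le_three_general {V : Type*}
    (K : Set V → Prop) (hdown : ∀ σ τ : Set V, τ ⊆ σ → K σ → K τ)
    (hcomp : ∀ σ : Set V, K σ ↔ ¬ K σᶜ)
    (H : Type*) [Group H]
    [MulAction H V] :
    Nat.card (Quot (fun x y : {s : Set V // (∃ v : V, s = MulAction.orbit H v) ∧ K s} =>
      K ((x : Set V) ∪ (y : Set V)))) ≤ 3 :=
  card_quot_union_le_three hdown (fun σ => or_iff_not_imp_right.mpr (hcomp σ).mpr)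
    (MulAction.pairwise_disjoint_orbit_subtype K)

/-- Suppose `H ≅ C_p` (`p` an odd prime) acts simplicially on a finite simplicial
complex `K` satisfying complementarity, and every connected component of the fixed
point complex `K^H` is a pseudomanifold.  Then `K^H` has at most `3` connected
components.  Here the vertices of `K^H` are the `H`-orbits that are simplices of `K`,
two vertices being adjacent when the union of the corresponding orbits is a simplex
of `K`. -/
theorem fixedPointComplex_components_le_three {V : Type*} [Fintype V]
    (K : Set V → Prop) (hdown : ∀ σ τ : Set V, τ ⊆ σ → K σ → K τ)
    (hcomp : ∀ σ : Set V, K σ ↔ ¬ K σᶜ)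
    {p : ℕ} (hp : p.Prime) (hodd : Odd p)
    (H : Type*) [Group H] [IsCyclic H] (hH : Nat.card H = p)
    [MulAction H V] (hsimp : ∀ (h : H) (σ : Set V), K σ → K ((fun v => h • v) '' σ))
    (hpseudo : ∀ a : {s : Set V // (∃ v : V, s = MulAction.orbit H v) ∧ K s},
      ∃ d : ℕ, IsPseudomanifold
        (fun S : Set {s : Set V // (∃ v : V, s = MulAction.orbit H v) ∧ K s} =>
          S ⊆ {b | Relation.EqvGen (fun x y => K ((x : Set V) ∪ (y : Set V))) a b} ∧
          K (⋃ x ∈ S, (x : Set V))) d) :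
    Nat.card (Quot (fun x y : {s : Set V // (∃ v : V, s = MulAction.orbit H v) ∧ K s} =>
      K ((x : Set V) ∪ (y : Set V)))) ≤ 3 :=
  fixedPointComplex_components_le_three_general K hdown hcomp H
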